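/- Let λ be a partition of n other than (1,1,…,1), and let (w1, w2) be a complementary pair of words corresponding to λ. Then the dimension of the Specht polytope P(λ) (the dimension of the direction of the affine span of P(λ) in ℝ^{R(w1)}) equals the dimension of the ℝ-linear span of the columns of the real Specht matrix, i.e., the rank of the Specht matrix, which is the dimension of the Specht module V(λ). -/

import Mathlib

/-- The action of a permutation on a word: `σ · w = w ∘ σ⁻¹`. -/
def wact {n : ℕ} (σ : Equiv.Perm (Fin n)) (w : Fin n → ℕ) : Fin n → ℕ :=
  w ∘ σ.symm

/-- `r` is a rearrangement of `w`. -/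
def IsRearr {n : ℕ} (w r : Fin n → ℕ) : Prop :=
  ∃ σ : Equiv.Perm (Fin n), wact σ w = r

/-- The type of rearrangements of a word `w`. -/
abbrev Rearr {n : ℕ} (w : Fin n → ℕ) : Type :=
  {r : Fin n → ℕ // IsRearr w r}

theorem wact_wact {n : ℕ} (σ τ : Equiv.Perm (Fin n)) (w : Fin n → ℕ) :
    wact σ (wact τ w) = wact (σ * τ) w := rfl

/-- The action of a permutation on the type of rearrangements of `w`. -/
def ract {n : ℕ} {w : Fin n → ℕ} (σ : Equiv.Perm (Fin n)) (r : Rearr w) : Rearr w :=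
  ⟨wact σ r.1, by
    obtain ⟨τ, hτ⟩ := r.2
    exact ⟨σ * τ, by rw [← hτ, wact_wact]⟩⟩

instance {n : ℕ} (w : Fin n → ℕ) : Finite (Rearr w) :=
  Finite.of_surjective (fun σ : Equiv.Perm (Fin n) => (⟨wact σ w, σ, rfl⟩ : Rearr w))
    (fun r => by obtain ⟨r, σ, hσ⟩ := r; exact ⟨σ, Subtype.ext hσ⟩)

noncomputable instance {n : ℕ} (w : Fin n → ℕ) : Fintype (Rearr w) :=
  Fintype.ofFinite _

/-- Young's character `Y(r1, r2) = Σ sign σ` over all `σ` with `σ·w1 = r1` and `σ·w2 = r2`. -/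
def youngChar {n : ℕ} (w1 w2 : Fin n → ℕ) (r1 r2 : Fin n → ℕ) : ℤ :=
  ∑ σ : Equiv.Perm (Fin n),
    if wact σ w1 = r1 ∧ wact σ w2 = r2 then (Equiv.Perm.sign σ : ℤ) else 0

/-- A pair of words has trivial (diagonal) stabilizer. -/
def FreePair {n : ℕ} (p : (Fin n → ℕ) × (Fin n → ℕ)) : Prop :=
  ∀ σ : Equiv.Perm (Fin n), wact σ p.1 = p.1 → wact σ p.2 = p.2 → σ = 1

/-- The diagonal action on `R(w1) × R(w2)` has exactly one free orbit. -/
def HaveComplRearr {n : ℕ} (w1 w2 : Fin n → ℕ) : Prop :=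
  (∃ p : (Fin n → ℕ) × (Fin n → ℕ), IsRearr w1 p.1 ∧ IsRearr w2 p.2 ∧ FreePair p) ∧
  ∀ p q : (Fin n → ℕ) × (Fin n → ℕ),
    IsRearr w1 p.1 → IsRearr w2 p.2 → FreePair p →
    IsRearr w1 q.1 → IsRearr w2 q.2 → FreePair q →
    ∃ σ : Equiv.Perm (Fin n), wact σ p.1 = q.1 ∧ wact σ p.2 = q.2

/-- `w1, w2` are complementary: there is a unique free orbit and `(w1, w2)` lies in it. -/
def Complementary {n : ℕ} (w1 w2 : Fin n → ℕ) : Prop :=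
  HaveComplRearr w1 w2 ∧ FreePair (w1, w2)

/-- A column of the Specht matrix, as a complex vector indexed by `R(w1)`. -/
noncomputable def spechtCol {n : ℕ} (w1 w2 : Fin n → ℕ) (r2 : Rearr w2) : Rearr w1 → ℂ :=
  fun r1 => (youngChar w1 w2 r1.1 r2.1 : ℂ)

/-- The Specht module: the span of the columns of the Specht matrix. -/
noncomputable def SpechtModule {n : ℕ} (w1 w2 : Fin n → ℕ) : Submodule ℂ (Rearr w1 → ℂ) :=
  Submodule.span ℂ (Set.range (spechtCol w1 w2))

/-- A column of the real Specht matrix. -/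
noncomputable def spechtColR {n : ℕ} (w1 w2 : Fin n → ℕ) (r2 : Rearr w2) : Rearr w1 → ℝ :=
  fun r1 => (youngChar w1 w2 r1.1 r2.1 : ℝ)

/-- The Specht polytope: the convex hull of the columns of the real Specht matrix. -/
noncomputable def SpechtPolytope {n : ℕ} (w1 w2 : Fin n → ℕ) : Set (Rearr w1 → ℝ) :=
  convexHull ℝ (Set.range (spechtColR w1 w2))

/-- The `S_n`-action on complex-valued functions on `R(w)`: `(σ·f)(r) = f(σ⁻¹·r)`. -/
def factC {n : ℕ} {w : Fin n → ℕ} (σ : Equiv.Perm (Fin n)) (f : Rearr w → ℂ) :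
    Rearr w → ℂ :=
  fun r => f (ract σ⁻¹ r)

/-- A weakly decreasing list of positive integers (a partition shape). -/
def SortedPartList (l : List ℕ) : Prop :=
  l.Pairwise (· ≥ ·) ∧ ∀ x ∈ l, 0 < x

/-- The multiset of letter multiplicities of a word. -/
def multMultiset {n : ℕ} (w : Fin n → ℕ) : Multiset ℕ :=
  (Finset.image w Finset.univ).val.map
    (fun v => (Finset.univ.filter (fun i => w i = v)).card)

/-- The decreasingly sorted letter multiplicities of `w` are given by the list `l`. -/
def HasMultiplicities {n : ℕ} (w : Fin n → ℕ) (l : List ℕ) : Prop :=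
  SortedPartList l ∧ (l : Multiset ℕ) = multMultiset w

/-- The conjugate partition, as a list: `λ*_i = #{k : λ_k ≥ i}`. -/
def conjList (l : List ℕ) : List ℕ :=
  (List.range (l.getD 0 0)).map (fun j => (l.filter (fun x => j + 1 ≤ x)).length)

/-- The complementary pair `(w1, w2)` corresponds to the partition `l`. -/
def CorrespondsTo {n : ℕ} (w1 w2 : Fin n → ℕ) (l : List ℕ) : Prop :=
  HasMultiplicities w1 l ∧ HasMultiplicities w2 (conjList l)

/-! If `λ` has a part `≥ 2`, then `w1` repeats a letter, and right multiplication by the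
transposition of two equal letters is a sign-reversing bijection of `{σ | σ·w1 = r1}`; so every
row of the Specht matrix sums to zero. The columns therefore have centroid `0`, which puts `0` in
the affine span of the polytope, and the direction of that span is then the linear span of the
columns. The rank of a matrix does not change under the field extension `ℝ ⊆ ℂ`. -/

open Function Submodule

theorem finrank_span_range_algebraMap_comp {K L ι κ : Type*} [Field K] [Field L] [Algebra K L]
    [Finite ι] [Finite κ] (f : κ → ι → K) :
    Module.finrank K (span K (Set.range f))
      = Module.finrank L (span L (Set.range fun k => algebraMap K L ∘ f k)) := by
  obtain ⟨μ, a, ha, hspan, hli⟩ := exists_linearIndependent' K f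
  have : Finite μ := Finite.of_injective a ha
  have := Fintype.ofFinite μ
  set g : κ → ι → L := fun k => algebraMap K L ∘ f k
  have hli' : LinearIndependent L (g ∘ a) := linearIndependent_algebraMap_comp_iff.mpr hli
  have hspan' : span L (Set.range (g ∘ a)) = span L (Set.range g) := by
    refine le_antisymm (span_mono (Set.range_comp_subset_range a g)) (span_le.mpr ?_)
    rintro - ⟨k, rfl⟩
    obtain ⟨c, hc⟩ := mem_span_range_iff_exists_fun K |>.mp
      (hspan ▸ subset_span (Set.mem_range_self k) : f k ∈ span K (Set.range (f ∘ a)))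
    refine mem_span_range_iff_exists_fun L |>.mpr ⟨algebraMap K L ∘ c, ?_⟩
    ext i
    simp [g, ← hc, Finset.sum_apply, Algebra.smul_def]
  rw [← hspan, ← hspan', finrank_span_eq_card hli, finrank_span_eq_card hli']

theorem vectorSpan_range_eq_span_range_of_sum_eq_zero {k V κ : Type*} [DivisionRing k]
    [CharZero k] [AddCommGroup V] [Module k V] [Fintype κ] [Nonempty κ] (f : κ → V)
    (hf : ∑ i, f i = 0) : vectorSpan k (Set.range f) = span k (Set.range f) := by
  have h0 : (0 : V) ∈ affineSpan k (Set.range f) := by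
    convert centroid_mem_affineSpan_of_nonempty k f (Finset.univ_nonempty (α := κ))
    rw [Finset.centroid_def, Finset.affineCombination_eq_linear_combination _ _ _
      (Finset.univ.sum_centroidWeights_eq_one_of_nonempty k Finset.univ_nonempty)]
    simp [Finset.centroidWeights_apply, ← Finset.smul_sum, hf]
  refine le_antisymm ?_ (span_le.mpr ?_)
  · rw [vectorSpan_def, span_le]
    rintro - ⟨a, ha, b, hb, rfl⟩
    exact sub_mem (subset_span ha) (subset_span hb)
  · rintro - ⟨i, rfl⟩
    rw [← direction_affineSpan]
    simpa using AffineSubspace.vsub_mem_direction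
      (mem_affineSpan k (Set.mem_range_self i)) h0

theorem wact_swap_of_eq {n : ℕ} {w : Fin n → ℕ} {i j : Fin n} (h : w i = w j) :
    wact (Equiv.swap i j) w = w := by
  funext k
  simp only [wact, comp_apply, Equiv.symm_swap, Equiv.swap_apply_def]
  split_ifs <;> simp_all

theorem sum_sign_wact_eq_zero_of_not_injective {n : ℕ} {w : Fin n → ℕ}
    (hw : ¬ Injective w) (r : Fin n → ℕ) :
    ∑ σ : Equiv.Perm (Fin n), (if wact σ w = r then (Equiv.Perm.sign σ : ℤ) else 0) = 0 := by
  obtain ⟨i, j, hw, hij⟩ : ∃ i j, w i = w j ∧ i ≠ j := by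
    simpa [Injective] using hw
  set F : Equiv.Perm (Fin n) → ℤ := fun σ => if wact σ w = r then (Equiv.Perm.sign σ : ℤ) else 0
  have hF : ∀ σ, F (σ * Equiv.swap i j) = -F σ := by
    intro σ
    simp only [F, ← wact_wact, wact_swap_of_eq hw, map_mul, Equiv.Perm.sign_swap hij]
    split_ifs <;> simp
  have := Equiv.sum_comp (Equiv.mulRight (Equiv.swap i j)) F
  simp only [Equiv.coe_mulRight, hF, Finset.sum_neg_distrib] at this
  linarith

theorem sum_youngChar_right {n : ℕ} (w1 w2 r1 : Fin n → ℕ) :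
    ∑ r2 : Rearr w2, youngChar w1 w2 r1 r2.1
      = ∑ σ : Equiv.Perm (Fin n), if wact σ w1 = r1 then (Equiv.Perm.sign σ : ℤ) else 0 := by
  simp only [youngChar]
  rw [Finset.sum_comm]
  refine Finset.sum_congr rfl fun σ _ => ?_
  rw [Finset.sum_eq_single_of_mem (⟨wact σ w2, σ, rfl⟩ : Rearr w2) (Finset.mem_univ _)]
  · simp
  · rintro r2 - hr2
    rw [if_neg]
    rintro ⟨-, h⟩
    exact hr2 (Subtype.ext h.symm)

theorem HasMultiplicities.not_injective {n : ℕ} {w : Fin n → ℕ} {l : List ℕ}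
    (hw : HasMultiplicities w l) (hl : 2 ≤ l.getD 0 0) : ¬ Injective w := by
  obtain ⟨a, L, rfl⟩ : ∃ a L, l = a :: L := by
    cases l with
    | nil => simp at hl
    | cons a L => exact ⟨a, L, rfl⟩
  have ha : a ∈ multMultiset w := hw.2 ▸ by simp
  obtain ⟨v, -, hv⟩ := Multiset.mem_map.mp ha
  have hcard : 1 < (Finset.univ.filter fun i => w i = v).card := by simp at hl; omega
  obtain ⟨x, hx, y, hy, hxy⟩ := Finset.one_lt_card.mp hcard
  rw [Finset.mem_filter] at hx hy
  exact fun hinj => hxy (hinj (hx.2.trans hy.2.symm))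

theorem sum_spechtColR_eq_zero {n : ℕ} {w1 : Fin n → ℕ} (hw1 : ¬ Injective w1)
    (w2 : Fin n → ℕ) : ∑ r2, spechtColR w1 w2 r2 = 0 := by
  funext r1
  simp only [Finset.sum_apply, spechtColR, Pi.zero_apply]
  exact_mod_cast (sum_youngChar_right w1 w2 r1.1).trans
    (sum_sign_wact_eq_zero_of_not_injective hw1 r1.1)

theorem specht_stmt_11_general {n : ℕ} (l : List ℕ)
    (hne : 2 ≤ l.getD 0 0)
    (w1 w2 : Fin n → ℕ) (hcorr : CorrespondsTo w1 w2 l) :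
    Module.finrank ℝ (affineSpan ℝ (SpechtPolytope w1 w2)).direction
        = Module.finrank ℝ (Submodule.span ℝ (Set.range (spechtColR w1 w2))) ∧
    Module.finrank ℝ (Submodule.span ℝ (Set.range (spechtColR w1 w2)))
        = Module.finrank ℂ (SpechtModule w1 w2) := by
  have : Nonempty (Rearr w2) := ⟨⟨w2, 1, rfl⟩⟩
  have hcols : (fun r2 => algebraMap ℝ ℂ ∘ spechtColR w1 w2 r2) = spechtCol w1 w2 := by
    funext r2 r1
    simp [spechtColR, spechtCol]
  constructor
  · rw [SpechtPolytope, affineSpan_convexHull, direction_affineSpan,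
      vectorSpan_range_eq_span_range_of_sum_eq_zero _
        (sum_spechtColR_eq_zero (hcorr.1.not_injective hne) w2)]
  · rw [SpechtModule, ← hcols]
    exact finrank_span_range_algebraMap_comp _

/-- For `λ ≠ (1,…,1)`, the dimension of the Specht polytope (the
dimension of the direction of its affine span) equals the rank of the Specht matrix
(the dimension of the span of its columns), which is the dimension of the Specht
module `V(λ)`. -/
theorem specht_stmt_11 {n : ℕ} (l : List ℕ) (hl : SortedPartList l) (hsum : l.sum = n)
    (hne : 2 ≤ l.getD 0 0)
    (w1 w2 : Fin n → ℕ) (hc : Complementary w1 w2) (hcorr : CorrespondsTo w1 w2 l) :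
    Module.finrank ℝ (affineSpan ℝ (SpechtPolytope w1 w2)).direction
        = Module.finrank ℝ (Submodule.span ℝ (Set.range (spechtColR w1 w2))) ∧
    Module.finrank ℝ (Submodule.span ℝ (Set.range (spechtColR w1 w2)))
        = Module.finrank ℂ (SpechtModule w1 w2) :=
  specht_stmt_11_general l hne w1 w2 hcorr
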